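/- arXiv:2209.07378 — 4 statements merged into one kernel-verified Lean document; each statement's English description precedes it below -/
import Mathlib

section
/- Let H be a finite-dimensional Hopf algebra with right integral μ_R and right cointegral e_R normalized by μ_R(e_R) = 1. Define a = μ_R(e_{R(2)}) e_{R(1)} ∈ H and α = μ_R(? e_R) ∈ H* (i.e. α(x) = μ_R(x e_R)). Then a is a group-like element: Δ(a) = a ⊗ a and ε(a) = 1. -/
/-!
Write `f ⇀ y = f(y₍₂₎) y₍₁₎`, so that `a = μ ⇀ e`. Since `g(μ ⇀ y) = (g * μ)(y)` for the
convolution product of `H*`, and `g * μ` is again a right integral, everything follows from the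
uniqueness of right integrals: a right integral `ν` with `ν(e) = 0` vanishes. Indeed
`Δe (x ⊗ 1) = Δe (1 ⊗ S x)` gives `ν(e₍₁₎ x) h(e₍₂₎) = h(S x) ν(e) = 0` for all `x` and `h ∈ H*`;
in finite dimension these functionals of `e₍₁₎ ⊗ e₍₂₎` span all `u ⊗ v ↦ ν(u g(v))`, and
`1 = e₍₁₎ S(f ⇀ e₍₂₎)` whenever `f(e) = 1`. Hence `g * μ = g(a) μ`, i.e. `μ ⇀ y = μ(y) a`, and
`Δa = e₍₁₎ ⊗ (μ ⇀ e₍₂₎) = a ⊗ a`, `ε(a) = μ(e) = 1`.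
-/

open Coalgebra TensorProduct HopfAlgebra WithConv

section Coalgebra

variable {R C : Type*} [CommSemiring R] [AddCommMonoid C] [Module R C]

/-- The left hit action `f ⇀ x = f(x₍₂₎) x₍₁₎` of the dual on a coalgebra. -/
noncomputable def Coalgebra.leftHit [CoalgebraStruct R C] (f : C →ₗ[R] R) : C →ₗ[R] C :=
  (_root_.TensorProduct.rid R C).toLinearMap ∘ₗ f.lTensor C ∘ₗ comul

section CoalgebraStruct

variable [CoalgebraStruct R C] {x : C} {ι : Type*}

lemma Coalgebra.Repr.leftHit_apply (r : Repr R x ι) (f : C →ₗ[R] R) :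
    leftHit f x = ∑ i ∈ r.index, f (r.right i) • r.left i := by
  simp [leftHit, ← r.eq, map_sum]

/-- A copy of `r` indexed in any universe, to instantiate hypotheses quantifying over
representations indexed in one fixed universe. -/
noncomputable def Coalgebra.Repr.reindexFin.{w} (r : Repr R x ι) :
    Repr R x (ULift.{w} (Fin r.index.card)) where
  index := Finset.univ
  left k := r.left (r.index.equivFin.symm k.down)
  right k := r.right (r.index.equivFin.symm k.down)
  eq := by
    rw [← r.eq, ← Finset.sum_coe_sort r.index]
    exact Fintype.sum_equiv (Equiv.ulift.trans r.index.equivFin.symm) _ _ fun _ => rfl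

end CoalgebraStruct

variable [Coalgebra R C]

lemma Coalgebra.counit_leftHit (f : C →ₗ[R] R) (x : C) :
    counit (R := R) (leftHit f x) = f x := by
  conv_rhs => rw [← sum_counit_smul (ℛ R x)]
  simp [(ℛ R x).leftHit_apply, map_sum, mul_comm]

lemma Coalgebra.apply_leftHit (g f : C →ₗ[R] R) (x : C) :
    g (leftHit f x) = (toConv g * toConv f) x := by
  simp [(ℛ R x).leftHit_apply, (ℛ R x).convMul_apply, map_sum, mul_comm]

lemma Coalgebra.comul_comp_leftHit (f : C →ₗ[R] R) :
    comul ∘ₗ leftHit f = (leftHit f).lTensor C ∘ₗ comul := by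
  let ρ : C ⊗[R] C →ₗ[R] C := (_root_.TensorProduct.rid R C).toLinearMap ∘ₗ f.lTensor C
  let ρ₂ : (C ⊗[R] C) ⊗[R] C →ₗ[R] C ⊗[R] C :=
    (_root_.TensorProduct.rid R (C ⊗[R] C)).toLinearMap ∘ₗ f.lTensor (C ⊗[R] C)
  have hρ : comul ∘ₗ ρ = ρ₂ ∘ₗ (comul (R := R)).rTensor C :=
    TensorProduct.ext' fun u v => by simp [ρ, ρ₂]
  have hρ₂ : ρ₂ ∘ₗ (_root_.TensorProduct.assoc R C C C).symm.toLinearMap = ρ.lTensor C :=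
    TensorProduct.ext_threefold' fun u v w => by simp [ρ, ρ₂, tmul_smul]
  calc comul ∘ₗ leftHit f = ρ₂ ∘ₗ (comul (R := R)).rTensor C ∘ₗ comul := by
        rw [leftHit, ← LinearMap.comp_assoc, ← LinearMap.comp_assoc]
        exact congrArg (· ∘ₗ comul) hρ
    _ = ρ.lTensor C ∘ₗ (comul (R := R)).lTensor C ∘ₗ comul := by
        rw [← coassoc_symm, ← hρ₂]
        rfl
    _ = (leftHit f).lTensor C ∘ₗ comul := by
        rw [← LinearMap.comp_assoc, ← LinearMap.lTensor_comp]
        rfl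

lemma Coalgebra.comul_leftHit (f : C →ₗ[R] R) (x : C) :
    comul (R := R) (leftHit f x) = (leftHit f).lTensor C (comul x) :=
  LinearMap.congr_fun (comul_comp_leftHit f) x

end Coalgebra

lemma TensorProduct.apply_mul'_lTensor_eq_zero {R A B : Type*} [CommRing R] [Semiring A]
    [Algebra R A] [Module.Free R A] [Module.Finite R A] [AddCommMonoid B] [Module R B]
    {ν : A →ₗ[R] R} {t : A ⊗[R] B}
    (ht : ∀ (z : A) (h : B →ₗ[R] R),
      LinearMap.mul' R R (map (ν ∘ₗ LinearMap.mulRight R z) h t) = 0)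
    (g : B →ₗ[R] A) : ν (LinearMap.mul' R A (g.lTensor A t)) = 0 := by
  let b := Module.Free.chooseBasis R A
  have hg : ν ∘ₗ LinearMap.mul' R A ∘ₗ g.lTensor A =
      ∑ k, LinearMap.mul' R R ∘ₗ map (ν ∘ₗ LinearMap.mulRight R (b k)) (b.coord k ∘ₗ g) := by
    refine TensorProduct.ext' fun u v => ?_
    have hv : ν (u * g v) = ∑ k, b.repr (g v) k * ν (u * b k) := by
      conv_lhs => rw [← b.sum_repr (g v), Finset.mul_sum, map_sum]
      simp only [mul_smul_comm, map_smul, smul_eq_mul]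
    simp [hv, mul_comm]
  simpa [ht] using LinearMap.congr_fun hg t

section HopfAlgebra

variable {R H : Type*} [CommSemiring R] [Semiring H] [HopfAlgebra R H]

/-- `ν` is a right integral of the convolution algebra `H*`, i.e. `ν(x₍₁₎) x₍₂₎ = ν(x) 1`. -/
def HopfAlgebra.IsRightIntegral (ν : WithConv (H →ₗ[R] R)) : Prop :=
  ∀ g : WithConv (H →ₗ[R] R), ν * g = g 1 • ν

variable (R) in
def HopfAlgebra.IsRightCointegral (e : H) : Prop :=
  ∀ x : H, e * x = counit (R := R) x • e

lemma HopfAlgebra.isRightIntegral_of_sum_smul.{w} {ν : H →ₗ[R] R}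
    (hν : ∀ (x : H) {ι : Type w} (r : Repr R x ι),
      ∑ i ∈ r.index, ν (r.left i) • r.right i = ν x • (1 : H)) :
    IsRightIntegral (toConv ν) := by
  intro g
  ext x
  let r : Repr R x (ULift.{w} (Fin _)) := (ℛ R x).reindexFin
  have h := congrArg g (hν x r)
  simp only [map_sum, map_smul, smul_eq_mul] at h
  rw [r.convMul_apply]
  simpa [mul_comm] using h

lemma HopfAlgebra.IsRightIntegral.mul_left {ν : WithConv (H →ₗ[R] R)} (hν : IsRightIntegral ν)
    (f : WithConv (H →ₗ[R] R)) : IsRightIntegral (f * ν) := fun g => by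
  rw [mul_assoc, hν g, mul_smul_comm]

lemma Coalgebra.Repr.sum_comul_mul_one_tmul_antipode {x : H} {ι : Type*} (r : Repr R x ι) :
    ∑ i ∈ r.index, comul (R := R) (r.left i) * ((1 : H) ⊗ₜ[R] antipode R (r.right i)) =
      x ⊗ₜ[R] 1 := by
  have key := congrArg ((LinearMap.mul' R H ∘ₗ (antipode R).lTensor H).lTensor H)
    (sum_tmul_tmul_eq r (fun i => ℛ R (r.left i)) (fun i => ℛ R (r.right i)))
  simp only [map_sum, LinearMap.lTensor_tmul, LinearMap.coe_comp, Function.comp_apply,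
    LinearMap.mul'_apply, ← tmul_sum, sum_mul_antipode_eq_smul] at key
  calc ∑ i ∈ r.index, comul (R := R) (r.left i) * ((1 : H) ⊗ₜ[R] antipode R (r.right i))
      = ∑ i ∈ r.index, r.left i ⊗ₜ[R] (counit (R := R) (r.right i) • (1 : H)) := by
        rw [← key]
        refine Finset.sum_congr rfl fun i _ => ?_
        rw [← (ℛ R (r.left i)).eq, Finset.sum_mul]
        simp only [Algebra.TensorProduct.tmul_mul_tmul, mul_one]
    _ = x ⊗ₜ[R] 1 := by
        have h := congrArg ((Algebra.linearMap R H).lTensor H) (sum_tmul_counit_eq r)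
        simpa only [map_sum, LinearMap.lTensor_tmul, Algebra.linearMap_apply,
          Algebra.algebraMap_eq_smul_one, one_smul] using h

lemma HopfAlgebra.IsRightCointegral.rTensor_mulRight_comul {e : H} (he : IsRightCointegral R e)
    (x : H) : (LinearMap.mulRight R x).rTensor H (comul e) =
      (LinearMap.mulRight R (antipode R x)).lTensor H (comul e) := by
  let r := ℛ R x
  calc (LinearMap.mulRight R x).rTensor H (comul e)
      = comul e * (x ⊗ₜ[R] (1 : H)) := by
        rw [LinearMap.rTensor, ← LinearMap.mulRight_one, ← LinearMap.mulRight_tmul]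
        rfl
    _ = ∑ i ∈ r.index, comul e * (comul (r.left i) * ((1 : H) ⊗ₜ[R] antipode R (r.right i))) := by
        rw [← r.sum_comul_mul_one_tmul_antipode, Finset.mul_sum]
    _ = ∑ i ∈ r.index,
          comul e * ((1 : H) ⊗ₜ[R] antipode R (counit (R := R) (r.left i) • r.right i)) := by
        refine Finset.sum_congr rfl fun i _ => ?_
        rw [← mul_assoc, ← Bialgebra.comul_mul, he, map_smul, map_smul, tmul_smul, smul_mul_assoc,
          mul_smul_comm]
    _ = comul e * ((1 : H) ⊗ₜ[R] antipode R x) := by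
        rw [← Finset.mul_sum, ← tmul_sum, ← map_sum, sum_counit_smul]
    _ = (LinearMap.mulRight R (antipode R x)).lTensor H (comul e) := by
        rw [LinearMap.lTensor, ← LinearMap.mulRight_one, ← LinearMap.mulRight_tmul]
        rfl

lemma HopfAlgebra.IsRightIntegral.mul'_map_mulRight_comul {ν : WithConv (H →ₗ[R] R)}
    (hν : IsRightIntegral ν) {e : H} (he : IsRightCointegral R e) (z : H) (h : H →ₗ[R] R) :
    LinearMap.mul' R R (map (ν.ofConv ∘ₗ LinearMap.mulRight R z) h (comul e)) =
      h (antipode R z) * ν e := by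
  rw [← LinearMap.map_comp_rTensor, LinearMap.comp_apply, he.rTensor_mulRight_comul,
    ← LinearMap.comp_apply (map _ _), LinearMap.map_comp_lTensor]
  have := congrArg (· e) (hν (toConv (h ∘ₗ LinearMap.mulRight R (antipode R z))))
  simpa using this

end HopfAlgebra

section FiniteDimensional

variable {K H : Type*} [Field K] [Ring H] [HopfAlgebra K H] [FiniteDimensional K H]

theorem HopfAlgebra.IsRightIntegral.eq_zero_of_apply_eq_zero {ν : WithConv (H →ₗ[K] K)}
    (hν : IsRightIntegral ν) {e : H} (he : IsRightCointegral K e) (he0 : e ≠ 0)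
    (hνe : ν e = 0) : ν = 0 := by
  obtain ⟨f, hf⟩ := Module.Projective.exists_dual_eq_one K he0
  have hone : LinearMap.mul' K H ((antipode K ∘ₗ leftHit f).lTensor H (comul e)) = 1 := by
    rw [LinearMap.lTensor_comp, LinearMap.comp_apply, ← comul_leftHit,
      mul_antipode_lTensor_comul_apply, counit_leftHit, hf, map_one]
  have hvanish (z : H) (h : H →ₗ[K] K) :
      LinearMap.mul' K K (map (ν.ofConv ∘ₗ LinearMap.mulRight K z) h (comul e)) = 0 := by
    rw [hν.mul'_map_mulRight_comul he, hνe, mul_zero]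
  have hmul (g : H →ₗ[K] H) (y : H) : LinearMap.mul' K H (g.lTensor H (comul e)) * y =
      LinearMap.mul' K H ((LinearMap.mulRight K y ∘ₗ g).lTensor H (comul e)) := by
    refine LinearMap.congr_fun (?_ : LinearMap.mulRight K y ∘ₗ LinearMap.mul' K H ∘ₗ g.lTensor H =
      LinearMap.mul' K H ∘ₗ (LinearMap.mulRight K y ∘ₗ g).lTensor H) (comul e)
    exact TensorProduct.ext' fun u v => by simp [mul_assoc]
  refine WithConv.ext (LinearMap.ext fun y => ?_)
  calc ν y = ν (LinearMap.mul' K H ((antipode K ∘ₗ leftHit f).lTensor H (comul e)) * y) := by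
        rw [hone, one_mul]
    _ = 0 := by
        rw [hmul]
        exact apply_mul'_lTensor_eq_zero hvanish _

theorem HopfAlgebra.IsRightIntegral.eq_smul {ν μ : WithConv (H →ₗ[K] K)} (hν : IsRightIntegral ν)
    (hμ : IsRightIntegral μ) {e : H} (he : IsRightCointegral K e) (hμe : μ e = 1) :
    ν = ν e • μ := by
  refine sub_eq_zero.mp (IsRightIntegral.eq_zero_of_apply_eq_zero (fun g => ?_) he ?_ ?_)
  · rw [sub_mul, hν g, smul_mul_assoc, hμ g, smul_sub, smul_comm]
  · rintro rfl
    simp at hμe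
  · simp [hμe]

theorem HopfAlgebra.leftHit_eq_smul {μ : H →ₗ[K] K} (hμ : IsRightIntegral (toConv μ)) {e : H}
    (he : IsRightCointegral K e) (hμe : μ e = 1) (y : H) :
    leftHit μ y = μ y • leftHit μ e := by
  refine Module.eval_apply_injective K (LinearMap.ext fun g => ?_)
  have hg := (hμ.mul_left (toConv g)).eq_smul hμ he hμe
  calc g (leftHit μ y) = (toConv g * toConv μ) y := apply_leftHit g μ y
    _ = (toConv g * toConv μ) e * μ y := congrArg (· y) hg
    _ = g (μ y • leftHit μ e) := by rw [map_smul, apply_leftHit, smul_eq_mul, mul_comm]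

theorem HopfAlgebra.isGroupLikeElem_leftHit {μ : H →ₗ[K] K} (hμ : IsRightIntegral (toConv μ))
    {e : H} (he : IsRightCointegral K e) (hμe : μ e = 1) : IsGroupLikeElem K (leftHit μ e) where
  counit_eq_one := by rw [counit_leftHit, hμe]
  comul_eq_tmul_self := by
    let r := ℛ K e
    calc comul (leftHit μ e) = ∑ i ∈ r.index, r.left i ⊗ₜ[K] leftHit μ (r.right i) := by
          rw [comul_leftHit, ← r.eq, map_sum]
          rfl
      _ = ∑ i ∈ r.index, (μ (r.right i) • r.left i) ⊗ₜ[K] leftHit μ e :=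
          Finset.sum_congr rfl fun i _ => by
            rw [leftHit_eq_smul hμ he hμe, tmul_smul, smul_tmul']
      _ = leftHit μ e ⊗ₜ[K] leftHit μ e := by rw [← sum_tmul, ← r.leftHit_apply]

end FiniteDimensional

/-- For a finite-dimensional Hopf algebra `H` with right integral `μR` and right cointegral
`eR` normalized by `μR eR = 1`, the distinguished element `a := μR (eR₍₂₎) • eR₍₁₎` is
group-like: `Δ a = a ⊗ a` and `ε a = 1`. -/
theorem distinguished_element_is_grouplike
    (K H : Type*) [Field K] [Ring H] [HopfAlgebra K H] [FiniteDimensional K H]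
    (μR : H →ₗ[K] K) (eR : H)
    (hμR : ∀ (x : H) {ι : Type*} (r : Coalgebra.Repr K x ι),
      ∑ i ∈ r.index, μR (r.left i) • r.right i = μR x • (1 : H))
    (heR : ∀ x : H, eR * x = Coalgebra.counit (R := K) x • eR)
    (hnorm : μR eR = 1) :
    ∀ {ι' : Type*} (re : Coalgebra.Repr K eR ι'),
      Coalgebra.comul (R := K) (∑ j ∈ re.index, μR (re.right j) • re.left j) =
          (∑ j ∈ re.index, μR (re.right j) • re.left j) ⊗ₜ[K]
            (∑ j ∈ re.index, μR (re.right j) • re.left j) ∧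
        Coalgebra.counit (R := K) (∑ j ∈ re.index, μR (re.right j) • re.left j) = 1 := by
  intro ι' re
  rw [← re.leftHit_apply]
  have h := isGroupLikeElem_leftHit (isRightIntegral_of_sum_smul hμR) heR hnorm
  exact ⟨h.comul_eq_tmul_self, h.counit_eq_one⟩
end

section
/- Let H be a finite-dimensional Hopf algebra with right integral μ_R and right cointegral e_R, μ_R(e_R) = 1, e_L = S^{-1}(e_R), μ_L = μ_R ∘ S, and q = α(a) the pairing of the distinguished group-likes. Then S(e_R) = q e_L and μ_L(e_R) = q. -/
/-!
For a right cointegral `e` one has `Δ(e) (y ⊗ 1) = Δ(e) (1 ⊗ S y)`, and contracting the first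
tensor factor with the right integral `μ` turns this into the formula `μ(e) S y = μ(e₁ y) e₂`.
Since `S` is anti-multiplicative and surjective, `S e` is a left cointegral, so at `y = S e` the
formula collapses to `S (S e) = μ(S e) e`; by linearity `μ(S e) = μ(e₁ e) μ(e₂) = q`.
Applying `S⁻¹` gives `S e = q e_L`.
-/

open Coalgebra HopfAlgebra TensorProduct

universe u

namespace Coalgebra.Repr

variable {R A : Type*} [CommSemiring R] [AddCommMonoid A] [Module R A] [CoalgebraStruct R A]
  {a : A} {ι : Type*}

noncomputable def uliftFin (r : Repr R a ι) : Repr R a (ULift.{u} (Fin r.index.card)) where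
  index := Finset.univ
  left i := r.left (r.index.equivFin.symm i.down)
  right i := r.right (r.index.equivFin.symm i.down)
  eq := by
    rw [← r.eq, ← Finset.sum_coe_sort r.index]
    exact Fintype.sum_equiv (Equiv.ulift.trans r.index.equivFin.symm) _ _ fun _ => rfl

theorem sum_smul_eq_lid_rTensor (r : Repr R a ι) (f : A →ₗ[R] R) :
    ∑ i ∈ r.index, f (r.left i) • r.right i =
      _root_.TensorProduct.lid R A (f.rTensor A (CoalgebraStruct.comul a)) := by
  simp [← r.eq, map_sum]

end Coalgebra.Repr

namespace HopfAlgebra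

variable {R A : Type*} [CommSemiring R] [Semiring A] [HopfAlgebra R A] {ι : Type*}

theorem sum_comul_mul_one_tmul_antipode {a : A} (r : Repr R a ι) :
    ∑ i ∈ r.index, comul (r.left i) * (1 ⊗ₜ[R] antipode R (r.right i)) = a ⊗ₜ[R] 1 := by
  have coassoc := congr(((LinearMap.mul' R A ∘ₗ (antipode R).lTensor A).lTensor A)
    $(sum_tmul_tmul_eq r (fun i => ℛ R (r.left i)) (fun i => ℛ R (r.right i))))
  simp only [map_sum, LinearMap.lTensor_tmul, LinearMap.comp_apply, LinearMap.mul'_apply,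
    ← TensorProduct.tmul_sum, sum_mul_antipode_eq_algebraMap_counit] at coassoc
  have counit_right := congr(((Algebra.linearMap R A).lTensor A) $(sum_tmul_counit_eq r))
  simp only [map_sum, LinearMap.lTensor_tmul, Algebra.linearMap_apply, map_one] at counit_right
  rw [← counit_right, ← coassoc]
  refine Finset.sum_congr rfl fun i _ => ?_
  simp [← (ℛ R (r.left i)).eq, Finset.sum_mul, Algebra.TensorProduct.tmul_mul_tmul]

variable (R) in
def IsRightCointegral_s9 (e : A) : Prop := ∀ x, e * x = counit (R := R) x • e

variable (R) in
def IsLeftCointegral (e : A) : Prop := ∀ x, x * e = counit (R := R) x • e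

namespace IsRightCointegral_s9

variable {e : A} (he : IsRightCointegral_s9 R e)
include he

theorem comul_mul_tmul_one (y : A) :
    comul (R := R) e * (y ⊗ₜ[R] 1) = comul (R := R) e * (1 ⊗ₜ[R] antipode R y) := by
  let r := ℛ R y
  calc comul (R := R) e * (y ⊗ₜ[R] 1)
      = ∑ i ∈ r.index, comul (R := R) (e * r.left i) * (1 ⊗ₜ[R] antipode R (r.right i)) := by
        simp only [← sum_comul_mul_one_tmul_antipode r, Finset.mul_sum, Bialgebra.comul_mul,
          mul_assoc]
    _ = ∑ i ∈ r.index,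
          counit (R := R) (r.left i) • (comul (R := R) e * (1 ⊗ₜ[R] antipode R (r.right i))) := by
        simp only [he _, map_smul, smul_mul_assoc]
    _ = comul (R := R) e * (1 ⊗ₜ[R] antipode R y) := by
        simp only [← mul_smul_comm, ← tmul_smul, ← map_smul, ← Finset.mul_sum, ← tmul_sum,
          ← map_sum, sum_counit_smul]

theorem smul_antipode_eq_sum (re : Repr R e ι) (μ : A →ₗ[R] R)
    (hμ : ∑ j ∈ re.index, μ (re.left j) • re.right j = μ e • (1 : A)) (y : A) :
    μ e • antipode R y = ∑ j ∈ re.index, μ (re.left j * y) • re.right j := by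
  have h := congr(_root_.TensorProduct.lid R A (μ.rTensor A $(he.comul_mul_tmul_one y)))
  simp only [← re.eq, Finset.sum_mul, Algebra.TensorProduct.tmul_mul_tmul, mul_one, map_sum,
    LinearMap.rTensor_tmul, _root_.TensorProduct.lid_tmul] at h
  rw [h, ← one_mul (antipode R y), ← smul_mul_assoc, ← hμ, Finset.sum_mul]
  simp only [smul_mul_assoc, one_mul]

theorem antipode_mul_antipode (x : A) :
    antipode R x * antipode R e = counit (R := R) x • antipode R e := by
  rw [← antipode_mul_antidistrib, he, map_smul]

theorem isLeftCointegral_antipode (hS : Function.Surjective (antipode R (A := A))) :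
    IsLeftCointegral R (antipode R e) := by
  intro x
  obtain ⟨x, rfl⟩ := hS x
  rw [he.antipode_mul_antipode, counit_antipode]

theorem smul_antipode_antipode (re : Repr R e ι) (μ : A →ₗ[R] R)
    (hμ : ∑ j ∈ re.index, μ (re.left j) • re.right j = μ e • (1 : A))
    (hS : Function.Surjective (antipode R (A := A))) :
    μ e • antipode R (antipode R e) = μ (antipode R e) • e := by
  rw [he.smul_antipode_eq_sum re μ hμ]
  simp only [he.isLeftCointegral_antipode hS _, map_smul, smul_eq_mul, mul_comm _ (μ _),
    mul_smul, ← Finset.smul_sum, sum_counit_smul]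

end IsRightCointegral_s9

end HopfAlgebra

open HopfAlgebra.IsRightCointegral_s9 in
theorem antipode_of_cointegral_eq_q_smul_general
    (K H : Type*) [Field K] [Ring H] [HopfAlgebra K H]
    (Sinv : H →ₗ[K] H)
    (h1 : Sinv ∘ₗ HopfAlgebra.antipode (R := K) (A := H) = LinearMap.id)
    (h2 : HopfAlgebra.antipode (R := K) (A := H) ∘ₗ Sinv = LinearMap.id)
    (μR : H →ₗ[K] K) (eR : H)
    (hμR : ∀ (x : H) (ι : Type*) (r : Coalgebra.Repr K x ι),
      ∑ i ∈ r.index, μR (r.left i) • r.right i = μR x • (1 : H))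
    (heR : ∀ x : H, eR * x = Coalgebra.counit (R := K) x • eR)
    (hnorm : μR eR = 1) :
    ∀ (ι' : Type*) (re : Coalgebra.Repr K eR ι'),
      HopfAlgebra.antipode (R := K) (A := H) eR =
          μR ((∑ j ∈ re.index, μR (re.right j) • re.left j) * eR) • Sinv eR ∧
        μR (HopfAlgebra.antipode (R := K) (A := H) eR) =
          μR ((∑ j ∈ re.index, μR (re.right j) • re.left j) * eR) := by
  intro ι' re
  -- `hμR` only accepts representations indexed in its own universe.
  have hμ : ∑ j ∈ re.index, μR (re.left j) • re.right j = μR eR • (1 : H) := by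
    rw [re.sum_smul_eq_lid_rTensor, ← re.uliftFin.sum_smul_eq_lid_rTensor, hμR]
  have hS : Function.Surjective (antipode K (A := H)) :=
    fun x => ⟨Sinv x, LinearMap.congr_fun h2 x⟩
  have hq : μR (antipode K eR) = μR ((∑ j ∈ re.index, μR (re.right j) • re.left j) * eR) := by
    have formula := smul_antipode_eq_sum heR re μR hμ eR
    rw [hnorm, one_smul] at formula
    simp only [formula, map_sum, map_smul, Finset.sum_mul, smul_mul_assoc, smul_eq_mul, mul_comm]
  refine ⟨?_, hq⟩
  have hSS := smul_antipode_antipode heR re μR hμ hS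
  rw [hnorm, one_smul] at hSS
  rw [← hq, ← map_smul, ← hSS]
  exact (LinearMap.congr_fun h1 _).symm

/-- For a finite-dimensional Hopf algebra `H` with right integral `μR`, right cointegral `eR`,
`μR eR = 1`, `eL = S⁻¹ eR`, `μL = μR ∘ S`, and `q = α a` the pairing of the distinguished
group-like elements, one has `S eR = q • eL` and `μL eR = q`. -/
theorem antipode_of_cointegral_eq_q_smul
    (K H : Type*) [Field K] [Ring H] [HopfAlgebra K H] [FiniteDimensional K H]
    (Sinv : H →ₗ[K] H)
    (h1 : Sinv ∘ₗ HopfAlgebra.antipode (R := K) (A := H) = LinearMap.id)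
    (h2 : HopfAlgebra.antipode (R := K) (A := H) ∘ₗ Sinv = LinearMap.id)
    (μR : H →ₗ[K] K) (eR : H)
    (hμR : ∀ (x : H) (ι : Type*) (r : Coalgebra.Repr K x ι),
      ∑ i ∈ r.index, μR (r.left i) • r.right i = μR x • (1 : H))
    (heR : ∀ x : H, eR * x = Coalgebra.counit (R := K) x • eR)
    (hnorm : μR eR = 1) :
    ∀ (ι' : Type*) (re : Coalgebra.Repr K eR ι'),
      HopfAlgebra.antipode (R := K) (A := H) eR =
          μR ((∑ j ∈ re.index, μR (re.right j) • re.left j) * eR) • Sinv eR ∧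
        μR (HopfAlgebra.antipode (R := K) (A := H) eR) =
          μR ((∑ j ∈ re.index, μR (re.right j) • re.left j) * eR) :=
  antipode_of_cointegral_eq_q_smul_general K H Sinv h1 h2 μR eR hμR heR hnorm
end

section
/- Let H be a finite-dimensional Hopf algebra with basis (e_i) and dual basis (e^i). In the Heisenberg double H(H), the canonical element T = Σ_i (ε ⊗ e_i) ⊗ (e^i ⊗ 1) ∈ H(H) ⊗ H(H) satisfies the pentagon equation T_{12} T_{13} T_{23} = T_{23} T_{12} in H(H)^{⊗3}. -/
/-!
Suppressing `ε` and `1`, write `T = Σᵢ eᵢ ⊗ eⁱ`, so that `T · (x ⊗ y) = Σᵢ eᵢ x ⊗ eⁱ y` for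
`x ⊗ y ∈ H ⊗ H`. Both sides of the pentagon equation equal `Σₗ T · Δ(eₗ) ⊗ eˡ`. On the left this is
the dual-basis identity `Σⱼₖ eⱼ ⊗ eₖ ⊗ eʲ eᵏ = Σₗ Δ(eₗ) ⊗ eˡ`, i.e. the product of `H*` is the
transpose of `Δ`; on the right it is `Σᵢ eᵢ ⊗ (u ⇀ eⁱ) = Σᵢ eᵢ u ⊗ eⁱ`, i.e. `u ⇀ -` is the
transpose of right multiplication by `u`.
-/

open Coalgebra TensorProduct

namespace HeisenbergDouble

variable (K H : Type*) [Field K] [Ring H] [HopfAlgebra K H] [FiniteDimensional K H]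

/-- The convolution product on the dual `H* = Module.Dual K H`, as a bilinear map:
`(f · g) x = f x₍₁₎ * g x₍₂₎`. -/
noncomputable def dmulB : Module.Dual K H →ₗ[K] Module.Dual K H →ₗ[K] Module.Dual K H :=
  LinearMap.mk₂ K
    (fun f g => LinearMap.mul' K K ∘ₗ TensorProduct.map f g ∘ₗ Coalgebra.comul (R := K))
    (fun f f' g => by (try dsimp only); rw [TensorProduct.map_add_left, LinearMap.add_comp, LinearMap.comp_add])
    (fun c f g => by (try dsimp only); rw [TensorProduct.map_smul_left, LinearMap.smul_comp, LinearMap.comp_smul])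
    (fun f g g' => by (try dsimp only); rw [TensorProduct.map_add_right, LinearMap.add_comp, LinearMap.comp_add])
    (fun c f g => by (try dsimp only); rw [TensorProduct.map_smul_right, LinearMap.smul_comp, LinearMap.comp_smul])

/-- The left action of `H` on `H*` given by `(a ⇀ g) x = g (x * a)`, as a bilinear map. -/
noncomputable def actB : H →ₗ[K] Module.Dual K H →ₗ[K] Module.Dual K H :=
  LinearMap.mk₂ K (fun a g => g ∘ₗ LinearMap.mulRight K a)
    (fun a a' g => by ext x; simp [mul_add])
    (fun c a g => by ext x; simp [mul_smul_comm])
    (fun a g g' => by ext x; simp)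
    (fun c a g => by ext x; simp)

/-- The underlying vector space `H* ⊗ H` of the Heisenberg double. -/
abbrev D := Module.Dual K H ⊗[K] H

/-- The multiplication of the Heisenberg double, as a linear map on `D ⊗ D`, implementing
`(f ⊗ a) · (g ⊗ b) = f · (a₍₁₎ ⇀ g) ⊗ a₍₂₎ * b`. -/
noncomputable def hmulT : D K H ⊗[K] D K H →ₗ[K] D K H :=
  LinearMap.rTensor H
      (TensorProduct.lift (dmulB K H) ∘ₗ
        LinearMap.lTensor (Module.Dual K H) (TensorProduct.lift (actB K H)) ∘ₗ
        (TensorProduct.assoc K (Module.Dual K H) H (Module.Dual K H)).toLinearMap) ∘ₗ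
    LinearMap.lTensor ((Module.Dual K H ⊗[K] H) ⊗[K] Module.Dual K H) (LinearMap.mul' K H) ∘ₗ
    (TensorProduct.tensorTensorTensorComm K (Module.Dual K H ⊗[K] H) H
        (Module.Dual K H) H).toLinearMap ∘ₗ
    LinearMap.rTensor (Module.Dual K H ⊗[K] H)
      ((TensorProduct.assoc K (Module.Dual K H) H H).symm.toLinearMap ∘ₗ
        LinearMap.lTensor (Module.Dual K H) (Coalgebra.comul (R := K)))

/-- The product of two elements of the Heisenberg double. -/
noncomputable def hmul (x y : D K H) : D K H := hmulT K H (x ⊗ₜ y)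

/-- The unit `ε ⊗ 1` of the Heisenberg double. -/
noncomputable def hunit : D K H := (Coalgebra.counit (R := K) (A := H)) ⊗ₜ (1 : H)

end HeisenbergDouble

namespace HeisenbergDouble

variable (K H : Type*) [Field K] [Ring H] [HopfAlgebra K H] [FiniteDimensional K H]

/-- The componentwise multiplication on `H(H) ⊗ H(H)`. -/
noncomputable def hmul2 (x y : D K H ⊗[K] D K H) : D K H ⊗[K] D K H :=
  (TensorProduct.map (hmulT K H) (hmulT K H) ∘ₗ
    (TensorProduct.tensorTensorTensorComm K (D K H) (D K H) (D K H) (D K H)).toLinearMap)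
    (x ⊗ₜ y)

/-- The componentwise multiplication on `H(H) ⊗ H(H) ⊗ H(H)`. -/
noncomputable def hmul3 (x y : (D K H ⊗[K] D K H) ⊗[K] D K H) :
    (D K H ⊗[K] D K H) ⊗[K] D K H :=
  (TensorProduct.map
      (TensorProduct.map (hmulT K H) (hmulT K H) ∘ₗ
        (TensorProduct.tensorTensorTensorComm K (D K H) (D K H) (D K H) (D K H)).toLinearMap)
      (hmulT K H) ∘ₗ
    (TensorProduct.tensorTensorTensorComm K (D K H ⊗[K] D K H) (D K H)
        (D K H ⊗[K] D K H) (D K H)).toLinearMap)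
    (x ⊗ₜ y)

end HeisenbergDouble

namespace HeisenbergDouble

variable {K H : Type*} [Field K] [Ring H] [HopfAlgebra K H]

theorem dmulB_apply (f g : Module.Dual K H) (x : H) :
    dmulB K H f g x = LinearMap.mul' K K (map f g (comul x)) := rfl

theorem dmulB_counit_left : dmulB K H counit = LinearMap.id := by
  ext g x
  rw [dmulB_apply, ← LinearMap.lTensor_comp_rTensor, LinearMap.comp_apply, rTensor_counit_comul]
  simp

theorem dmulB_counit_right (f : Module.Dual K H) : dmulB K H f counit = f := by
  ext x
  rw [dmulB_apply, ← LinearMap.rTensor_comp_lTensor, LinearMap.comp_apply, lTensor_counit_comul]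
  simp

theorem actB_apply (a : H) (g : Module.Dual K H) (x : H) : actB K H a g x = g (x * a) := rfl

theorem actB_one (g : Module.Dual K H) : actB K H 1 g = g := by
  ext x
  rw [actB_apply, mul_one]

theorem flip_actB_counit :
    (actB K H).flip counit = LinearMap.smulRight (counit : H →ₗ[K] K) counit := by
  ext a x
  simp [actB_apply, mul_comm]

theorem hmulT_tmul (f g : Module.Dual K H) (a c : H) :
    hmulT K H ((f ⊗ₜ a) ⊗ₜ (g ⊗ₜ c)) =
      map (dmulB K H f ∘ₗ (actB K H).flip g) (LinearMap.mulRight K c) (comul a) := by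
  rw [hmulT]
  simp only [LinearMap.comp_apply, LinearEquiv.coe_coe, LinearMap.rTensor_tmul,
    LinearMap.lTensor_tmul]
  induction comul (R := K) a using TensorProduct.induction_on with
  | zero => simp
  | tmul u v => simp [tensorTensorTensorComm_tmul, actB]
  | add x y hx hy => simp only [tmul_add, add_tmul, map_add, hx, hy]

theorem hmulT_one_tmul (f g : Module.Dual K H) (c : H) :
    hmulT K H ((f ⊗ₜ 1) ⊗ₜ (g ⊗ₜ c)) = dmulB K H f g ⊗ₜ c := by
  rw [hmulT_tmul, Bialgebra.comul_one, Algebra.TensorProduct.one_def, TensorProduct.map_tmul,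
    LinearMap.comp_apply, LinearMap.flip_apply, actB_one, LinearMap.mulRight_apply, one_mul]

theorem hmulT_counit_tmul (a : H) (g : Module.Dual K H) (c : H) :
    hmulT K H ((counit ⊗ₜ a) ⊗ₜ (g ⊗ₜ c)) =
      map ((actB K H).flip g) (LinearMap.mulRight K c) (comul a) := by
  rw [hmulT_tmul, dmulB_counit_left, LinearMap.id_comp]

theorem hmulT_counit_tmul_counit (a c : H) :
    hmulT K H ((counit ⊗ₜ a) ⊗ₜ (counit ⊗ₜ c)) = (counit : Module.Dual K H) ⊗ₜ (a * c) := by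
  have hmap : map (LinearMap.smulRight (counit : H →ₗ[K] K) counit) (LinearMap.mulRight K c) =
      TensorProduct.mk K (Module.Dual K H) H counit ∘ₗ LinearMap.mulRight K c ∘ₗ
        (TensorProduct.lid K H).toLinearMap ∘ₗ LinearMap.rTensor H counit := by
    ext u v
    simp [smul_tmul]
  rw [hmulT_counit_tmul, flip_actB_counit, hmap]
  simp [rTensor_counit_comul]

theorem hmul3_tmul (p q r p' q' r' : D K H) :
    hmul3 K H ((p ⊗ₜ q) ⊗ₜ r) ((p' ⊗ₜ q') ⊗ₜ r') =
      (hmulT K H (p ⊗ₜ p') ⊗ₜ hmulT K H (q ⊗ₜ q')) ⊗ₜ hmulT K H (r ⊗ₜ r') := by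
  simp [hmul3, tensorTensorTensorComm_tmul]

theorem hmul3_sum_left {α : Type*} (s : Finset α) (x : α → (D K H ⊗[K] D K H) ⊗[K] D K H)
    (y : (D K H ⊗[K] D K H) ⊗[K] D K H) :
    hmul3 K H (∑ a ∈ s, x a) y = ∑ a ∈ s, hmul3 K H (x a) y := by
  simp [hmul3, sum_tmul]

theorem hmul3_sum_right {α : Type*} (s : Finset α) (x : (D K H ⊗[K] D K H) ⊗[K] D K H)
    (y : α → (D K H ⊗[K] D K H) ⊗[K] D K H) :
    hmul3 K H x (∑ a ∈ s, y a) = ∑ a ∈ s, hmul3 K H x (y a) := by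
  simp [hmul3, tmul_sum]

section Basis

variable {ι : Type*} [Fintype ι] (b : Module.Basis ι K H)

theorem sum_tmul_actB_coord (u : H) :
    ∑ i, b i ⊗ₜ[K] actB K H u (b.coord i) = ∑ i, (b i * u) ⊗ₜ[K] b.coord i := by
  have hexpand (i : ι) : actB K H u (b.coord i) = ∑ j, b.coord i (b j * u) • b.coord j := by
    simpa only [actB_apply] using (b.sum_dual_apply_smul_coord (actB K H u (b.coord i))).symm
  simp_rw [hexpand, tmul_sum, ← smul_tmul]
  rw [Finset.sum_comm]
  simp_rw [← sum_tmul, Module.Basis.coord_apply, b.sum_repr]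

theorem sum_coord_mul_coord_smul_tmul (z : H ⊗[K] H) :
    ∑ j, ∑ k, LinearMap.mul' K K (map (b.coord j) (b.coord k) z) • (b j ⊗ₜ[K] b k) = z := by
  induction z using TensorProduct.induction_on with
  | zero => simp
  | tmul x y =>
    simp_rw [TensorProduct.map_tmul, LinearMap.mul'_apply, ← smul_tmul_smul, ← tmul_sum,
      ← sum_tmul, Module.Basis.coord_apply, b.sum_repr]
  | add x y hx hy => simp only [map_add, add_smul, Finset.sum_add_distrib, hx, hy]

theorem sum_tmul_dmulB_coord :
    ∑ j, ∑ k, (b j ⊗ₜ[K] b k) ⊗ₜ[K] dmulB K H (b.coord j) (b.coord k) =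
      ∑ l, comul (b l) ⊗ₜ[K] b.coord l := by
  have hexpand (j k : ι) : dmulB K H (b.coord j) (b.coord k) =
      ∑ l, LinearMap.mul' K K (map (b.coord j) (b.coord k) (comul (b l))) • b.coord l := by
    simpa only [dmulB_apply] using
      (b.sum_dual_apply_smul_coord (dmulB K H (b.coord j) (b.coord k))).symm
  conv_rhs => enter [2, l]; rw [← sum_coord_mul_coord_smul_tmul b (comul (b l))]
  simp_rw [hexpand, tmul_sum, sum_tmul, tmul_smul, ← smul_tmul']
  conv_rhs => rw [Finset.sum_comm]
  exact Finset.sum_congr rfl fun j _ => Finset.sum_comm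

/-- `z ↦ T · z` for `z ∈ H ⊗ H ⊆ H(H) ⊗ H(H)`, where `T` is the canonical element. -/
noncomputable def canonicalMul : H ⊗[K] H →ₗ[K] D K H ⊗[K] D K H :=
  ∑ i, map (TensorProduct.mk K (Module.Dual K H) H counit ∘ₗ LinearMap.mulLeft K (b i))
    (TensorProduct.mk K (Module.Dual K H) H (b.coord i))

theorem canonicalMul_tmul (u v : H) :
    canonicalMul b (u ⊗ₜ v) =
      ∑ i, (counit ⊗ₜ[K] (b i * u)) ⊗ₜ[K] ((b.coord i : Module.Dual K H) ⊗ₜ[K] v) := by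
  simp [canonicalMul]

theorem sum_tmul_rTensor_flip_actB (z : H ⊗[K] H) :
    ∑ i, (counit ⊗ₜ[K] b i) ⊗ₜ[K] LinearMap.rTensor H ((actB K H).flip (b.coord i)) z =
      canonicalMul b z := by
  induction z using TensorProduct.induction_on with
  | zero => simp
  | tmul u v =>
    have := congr(map (TensorProduct.mk K (Module.Dual K H) H counit)
      ((TensorProduct.mk K (Module.Dual K H) H).flip v) $(sum_tmul_actB_coord b u))
    simpa [canonicalMul_tmul] using this
  | add x y hx hy => simp only [map_add, tmul_add, Finset.sum_add_distrib, hx, hy]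

end Basis

end HeisenbergDouble

open HeisenbergDouble in
theorem canonical_element_pentagon_equation_general
    (K H : Type*) [Field K] [Ring H] [HopfAlgebra K H]
    (ι : Type*) [Fintype ι] (b : Module.Basis ι K H) :
    hmul3 K H
        (hmul3 K H
          (∑ i, ((Coalgebra.counit (R := K) (A := H) ⊗ₜ b i) ⊗ₜ
              ((b.coord i : Module.Dual K H) ⊗ₜ (1 : H))) ⊗ₜ hunit K H)
          (∑ i, (((Coalgebra.counit (R := K) (A := H) ⊗ₜ b i) : D K H) ⊗ₜ hunit K H) ⊗ₜ
              (((b.coord i : Module.Dual K H) ⊗ₜ (1 : H)) : D K H)))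
        (∑ i, ((hunit K H) ⊗ₜ ((Coalgebra.counit (R := K) (A := H) ⊗ₜ b i) : D K H)) ⊗ₜ
            (((b.coord i : Module.Dual K H) ⊗ₜ (1 : H)) : D K H)) =
      hmul3 K H
        (∑ i, ((hunit K H) ⊗ₜ ((Coalgebra.counit (R := K) (A := H) ⊗ₜ b i) : D K H)) ⊗ₜ
            (((b.coord i : Module.Dual K H) ⊗ₜ (1 : H)) : D K H))
        (∑ i, (((Coalgebra.counit (R := K) (A := H) ⊗ₜ b i) : D K H) ⊗ₜ
            ((b.coord i : Module.Dual K H) ⊗ₜ (1 : H))) ⊗ₜ hunit K H) := by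
  simp only [hunit, hmul3_sum_left, hmul3_sum_right, hmul3_tmul, hmulT_one_tmul,
    hmulT_counit_tmul_counit, dmulB_counit_left, dmulB_counit_right, LinearMap.id_apply, mul_one]
  -- separately, since `hmulT_counit_tmul` would preempt `hmulT_counit_tmul_counit`
  simp only [hmulT_counit_tmul, LinearMap.mulRight_one, ← LinearMap.rTensor_def]
  calc _ = ∑ l, canonicalMul b (comul (b l)) ⊗ₜ ((b.coord l : Module.Dual K H) ⊗ₜ[K] (1 : H)) := by
        rw [Finset.sum_comm]
        simpa [canonicalMul_tmul, sum_tmul] using congr(map (canonicalMul b)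
          ((TensorProduct.mk K (Module.Dual K H) H).flip 1) $(sum_tmul_dmulB_coord b))
    _ = _ := by
        rw [Finset.sum_comm]
        simp_rw [← sum_tmul, sum_tmul_rTensor_flip_actB]

open HeisenbergDouble in
/-- The canonical element `T = Σᵢ (ε ⊗ eᵢ) ⊗ (eⁱ ⊗ 1)` of the Heisenberg double of a
finite-dimensional Hopf algebra satisfies the pentagon equation
`T₁₂ T₁₃ T₂₃ = T₂₃ T₁₂` in `H(H)^⊗3`. -/
theorem canonical_element_pentagon_equation
    (K H : Type*) [Field K] [Ring H] [HopfAlgebra K H] [FiniteDimensional K H]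
    (ι : Type*) [Fintype ι] (b : Module.Basis ι K H) :
    hmul3 K H
        (hmul3 K H
          (∑ i, ((Coalgebra.counit (R := K) (A := H) ⊗ₜ b i) ⊗ₜ
              ((b.coord i : Module.Dual K H) ⊗ₜ (1 : H))) ⊗ₜ hunit K H)
          (∑ i, (((Coalgebra.counit (R := K) (A := H) ⊗ₜ b i) : D K H) ⊗ₜ hunit K H) ⊗ₜ
              (((b.coord i : Module.Dual K H) ⊗ₜ (1 : H)) : D K H)))
        (∑ i, ((hunit K H) ⊗ₜ ((Coalgebra.counit (R := K) (A := H) ⊗ₜ b i) : D K H)) ⊗ₜ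
            (((b.coord i : Module.Dual K H) ⊗ₜ (1 : H)) : D K H)) =
      hmul3 K H
        (∑ i, ((hunit K H) ⊗ₜ ((Coalgebra.counit (R := K) (A := H) ⊗ₜ b i) : D K H)) ⊗ₜ
            (((b.coord i : Module.Dual K H) ⊗ₜ (1 : H)) : D K H))
        (∑ i, (((Coalgebra.counit (R := K) (A := H) ⊗ₜ b i) : D K H) ⊗ₜ
            ((b.coord i : Module.Dual K H) ⊗ₜ (1 : H))) ⊗ₜ hunit K H) :=
  canonical_element_pentagon_equation_general K H ι b
end

section
/- Let H be a finite-dimensional Hopf algebra, G = Σ_{i,j} e^i e^j ⊗ S^{-1}(e_j) S^2(e_i) the pivotal element of its Heisenberg double, and ρ the Fock space action on H*. Then ρ(G)(h) = (S^2)*(h) for all h ∈ H*, where (S^2)* is the transpose of S^2. -/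
open Coalgebra TensorProduct

namespace HeisenbergDouble

variable (K H : Type*) [Field K] [Ring H] [HopfAlgebra K H] [FiniteDimensional K H]

/-- The Fock representation of the Heisenberg double on `H*`:
`ρ (f ⊗ a) h = f · (a ⇀ h)`. -/
noncomputable def fock : D K H →ₗ[K] Module.Dual K H →ₗ[K] Module.Dual K H :=
  TensorProduct.lift
    (LinearMap.mk₂ K (fun f a => dmulB K H f ∘ₗ actB K H a)
      (fun f f' a => by (try dsimp only); rw [map_add, LinearMap.add_comp])
      (fun c f a => by (try dsimp only); rw [map_smul, LinearMap.smul_comp])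
      (fun f a a' => by (try dsimp only); rw [map_add, LinearMap.comp_add])
      (fun c f a => by (try dsimp only); rw [map_smul, LinearMap.comp_smul]))

end HeisenbergDouble

/-!
Expanding `eⁱ eʲ` through the comultiplication and contracting the dual bases turns
`ρ(G)(h)(x)` into `h (Σ x₍₃₎ S⁻¹(x₍₂₎) S²(x₍₁₎))`. By coassociativity this sum equals
`Σ x₍₂₎₍₂₎ S⁻¹(x₍₂₎₍₁₎) S²(x₍₁₎)`, and `Σ y₍₂₎ S⁻¹(y₍₁₎) = ε(y) 1`, because applying the
injective anti-multiplicative `S` turns it into the antipode axiom `Σ y₍₁₎ S(y₍₂₎) = ε(y) 1`.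
What is left is `Σ ε(x₍₂₎) S²(x₍₁₎) = S²(x)`.
-/

section Sweedler

open HopfAlgebra

variable {R A : Type*} [CommSemiring R]

theorem Coalgebra.sum_counit_smul_right [AddCommMonoid A] [Module R A] [Coalgebra R A] {a : A}
    {κ : Type*} (𝓡 : Repr R a κ) :
    ∑ i ∈ 𝓡.index, counit (R := R) (𝓡.right i) • 𝓡.left i = a := by
  have h := congr(_root_.TensorProduct.rid R A $(sum_tmul_counit_eq 𝓡))
  simpa only [map_sum, _root_.TensorProduct.rid_tmul, one_smul] using h

variable [Semiring A] [HopfAlgebra R A]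

local notation "S" => HopfAlgebra.antipode R (A := A)

theorem HopfAlgebra.sum_mul_inv_antipode_eq_smul {Sinv : A →ₗ[R] A}
    (h1 : Sinv ∘ₗ S = LinearMap.id) (h2 : S ∘ₗ Sinv = LinearMap.id)
    {a : A} {κ : Type*} (𝓡 : Repr R a κ) :
    ∑ i ∈ 𝓡.index, 𝓡.right i * Sinv (𝓡.left i) = counit (R := R) a • 1 := by
  have hS : Function.LeftInverse Sinv S := LinearMap.congr_fun h1
  apply hS.injective
  simp only [map_sum, map_smul, antipode_mul_antidistrib, HopfAlgebra.antipode_one,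
    show ∀ x, S (Sinv x) = x from LinearMap.congr_fun h2]
  exact sum_mul_antipode_eq_smul 𝓡

theorem HopfAlgebra.sum_mul_inv_antipode_mul_antipode_antipode {Sinv : A →ₗ[R] A}
    (h1 : Sinv ∘ₗ S = LinearMap.id) (h2 : S ∘ₗ Sinv = LinearMap.id)
    {a : A} {κ : Type*} {κ₁ : κ → Type*} (𝓡 : Repr R a κ)
    (𝓡₁ : ∀ i, Repr R (𝓡.left i) (κ₁ i)) :
    ∑ i ∈ 𝓡.index,
        𝓡.right i * ∑ j ∈ (𝓡₁ i).index, Sinv ((𝓡₁ i).right j) * S (S ((𝓡₁ i).left j)) =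
      S (S a) := by
  let Φ : A ⊗[R] (A ⊗[R] A) →ₗ[R] A :=
    LinearMap.mul' R A ∘ₗ (TensorProduct.comm R A A).toLinearMap ∘ₗ
      TensorProduct.map (S ∘ₗ S)
        (LinearMap.mul' R A ∘ₗ (TensorProduct.comm R A A).toLinearMap ∘ₗ
          TensorProduct.map Sinv LinearMap.id)
  have hΦ (u v w : A) : Φ (u ⊗ₜ (v ⊗ₜ w)) = w * Sinv v * S (S u) := by simp [Φ]
  let 𝓡₂ := fun i => ℛ R (𝓡.right i)
  have coassoc := congr(Φ $(sum_tmul_tmul_eq 𝓡 𝓡₁ 𝓡₂))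
  simp only [map_sum, hΦ] at coassoc
  calc _ = ∑ i ∈ 𝓡.index, (∑ j ∈ (𝓡₂ i).index, (𝓡₂ i).right j * Sinv ((𝓡₂ i).left j)) *
        S (S (𝓡.left i)) := by
        simp only [Finset.mul_sum, Finset.sum_mul, ← mul_assoc, coassoc]
    _ = S (S a) := by
        simp only [sum_mul_inv_antipode_eq_smul h1 h2, smul_mul_assoc, one_mul, ← map_smul,
          ← map_sum, Coalgebra.sum_counit_smul_right]

end Sweedler

theorem Module.Basis.sum_coord_mul_coord_smul {R M P ι : Type*} [CommSemiring R]
    [AddCommMonoid M] [Module R M] [AddCommMonoid P] [Module R P] [Fintype ι]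
    (b : Module.Basis ι R M) (B : M →ₗ[R] M →ₗ[R] P) (u w : M) :
    ∑ i, ∑ j, (b.coord i u * b.coord j w) • B (b i) (b j) = B u w := by
  conv_rhs => rw [← b.sum_repr u, ← b.sum_repr w]
  simp only [map_sum, map_smul, LinearMap.sum_apply, LinearMap.smul_apply, Finset.smul_sum,
    smul_smul, Module.Basis.coord_apply]
  rw [Finset.sum_comm]
  simp only [mul_comm]

namespace HeisenbergDouble

variable {K H : Type*} [Field K] [Ring H] [HopfAlgebra K H]

theorem dmulB_apply_of_repr (f g : Module.Dual K H) {x : H} {κ : Type*} (𝓡 : Repr K x κ) :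
    dmulB K H f g x = ∑ i ∈ 𝓡.index, f (𝓡.left i) * g (𝓡.right i) := by
  simp [dmulB, ← 𝓡.eq]

theorem fock_tmul_apply_of_repr (f : Module.Dual K H) (a : H) (g : Module.Dual K H) {x : H}
    {κ : Type*} (𝓡 : Repr K x κ) :
    fock K H (f ⊗ₜ a) g x = ∑ i ∈ 𝓡.index, f (𝓡.left i) * g (𝓡.right i * a) := by
  simp [fock, dmulB_apply_of_repr _ _ 𝓡, actB_apply]

variable {ι : Type*} [Fintype ι] (b : Module.Basis ι K H)

theorem sum_dmulB_coord_smul {P : Type*} [AddCommMonoid P] [Module K P] (B : H →ₗ[K] H →ₗ[K] P)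
    {y : H} {κ : Type*} (𝓡 : Repr K y κ) :
    ∑ i, ∑ j, dmulB K H (b.coord i) (b.coord j) y • B (b i) (b j) =
      ∑ n ∈ 𝓡.index, B (𝓡.left n) (𝓡.right n) := by
  simp only [dmulB_apply_of_repr _ _ 𝓡, Finset.sum_smul]
  rw [Finset.sum_congr rfl fun i _ => Finset.sum_comm, Finset.sum_comm]
  exact Finset.sum_congr rfl fun n _ => b.sum_coord_mul_coord_smul B _ _

theorem fock_sum_dmulB_coord_tmul_apply (B : H →ₗ[K] H →ₗ[K] H) (g : Module.Dual K H) {x : H}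
    {κ : Type*} {κ₁ : κ → Type*} (𝓡 : Repr K x κ) (𝓡₁ : ∀ m, Repr K (𝓡.left m) (κ₁ m)) :
    fock K H (∑ i, ∑ j, dmulB K H (b.coord i) (b.coord j) ⊗ₜ B (b i) (b j)) g x =
      ∑ m ∈ 𝓡.index,
        g (𝓡.right m * ∑ n ∈ (𝓡₁ m).index, B ((𝓡₁ m).left n) ((𝓡₁ m).right n)) := by
  simp only [← sum_dmulB_coord_smul b B (𝓡₁ _), Finset.mul_sum, mul_smul_comm, map_sum,
    map_smul, smul_eq_mul, LinearMap.sum_apply, fock_tmul_apply_of_repr _ _ _ 𝓡]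
  rw [Finset.sum_congr rfl fun i _ => Finset.sum_comm, Finset.sum_comm]

end HeisenbergDouble

open HeisenbergDouble in
theorem fock_action_of_pivotal_element_general
    (K H : Type*) [Field K] [Ring H] [HopfAlgebra K H]
    (Sinv : H →ₗ[K] H)
    (h1 : Sinv ∘ₗ HopfAlgebra.antipode (R := K) (A := H) = LinearMap.id)
    (h2 : HopfAlgebra.antipode (R := K) (A := H) ∘ₗ Sinv = LinearMap.id)
    (ι : Type*) [Fintype ι] (b : Module.Basis ι K H) :
    ∀ h : Module.Dual K H,
      fock K H
          (∑ i, ∑ j,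
            dmulB K H (b.coord i) (b.coord j) ⊗ₜ
              (Sinv (b j) *
                HopfAlgebra.antipode (R := K) (A := H)
                  (HopfAlgebra.antipode (R := K) (A := H) (b i))))
          h =
        h ∘ₗ HopfAlgebra.antipode (R := K) (A := H) ∘ₗ HopfAlgebra.antipode (R := K) (A := H) := by
  intro h
  ext x
  have hρ := fock_sum_dmulB_coord_tmul_apply b
    ((LinearMap.mul K H).flip.compl₁₂ (HopfAlgebra.antipode K ∘ₗ HopfAlgebra.antipode K) Sinv)
    h (ℛ K x) (fun m => ℛ K ((ℛ K x).left m))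
  simp only [LinearMap.compl₁₂_apply, LinearMap.flip_apply, LinearMap.mul_apply',
    LinearMap.comp_apply] at hρ
  rw [hρ, ← map_sum, HopfAlgebra.sum_mul_inv_antipode_mul_antipode_antipode h1 h2]
  rfl

open HeisenbergDouble in
/-- The Fock action of the pivotal element `G = Σᵢⱼ eⁱ eʲ ⊗ S⁻¹ eⱼ * S² eᵢ` of the Heisenberg
double is the transpose of `S²`: `ρ G h = (S²)* h = h ∘ S²` for all `h ∈ H*`. -/
theorem fock_action_of_pivotal_element
    (K H : Type*) [Field K] [Ring H] [HopfAlgebra K H] [FiniteDimensional K H]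
    (Sinv : H →ₗ[K] H)
    (h1 : Sinv ∘ₗ HopfAlgebra.antipode (R := K) (A := H) = LinearMap.id)
    (h2 : HopfAlgebra.antipode (R := K) (A := H) ∘ₗ Sinv = LinearMap.id)
    (ι : Type*) [Fintype ι] (b : Module.Basis ι K H) :
    ∀ h : Module.Dual K H,
      fock K H
          (∑ i, ∑ j,
            dmulB K H (b.coord i) (b.coord j) ⊗ₜ
              (Sinv (b j) *
                HopfAlgebra.antipode (R := K) (A := H)
                  (HopfAlgebra.antipode (R := K) (A := H) (b i))))
          h =
        h ∘ₗ HopfAlgebra.antipode (R := K) (A := H) ∘ₗ HopfAlgebra.antipode (R := K) (A := H) :=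
  fock_action_of_pivotal_element_general K H Sinv h1 h2 ι b
end
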